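/- Suppose h satisfies the latent-level outcome bridge equation (for every t ∈ ℝ, E[h(t,W,A,X) | σ(A,U,X)] = E[1{T>t} | σ(A,U,X)] a.s.) and proxy independence holds. Then for every a ∈ {0,1}, every t ∈ ℝ, and every bounded measurable function q̃ of (Z,A,X), P(T(a) > t) = E[ 1{A=a}·q̃(Z,A,X)·(1{T>t} − h(t,W,A,X)) + h(t,W,a,X) ]. In particular, the doubly robust identifying functional recovers the counterfactual survival probability even when the treatment bridge function is arbitrarily misspecified. (Double robustness under model ℳ_h.) -/

import Mathlib

open MeasureTheory ProbabilityTheory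

/-!
Write `D = 1{T(a) > t} − h(t, W, a, X)`. On `{A = a}` consistency turns the observed bridge
residual `1{T > t} − h(t, W, A, X)` into `D`, and `1{A = a}` is `σ(A, U, X)`-measurable, so the
bridge equation gives `E[1{A = a} D | U, X] = 0`. Since `X` is `σ(U, X)`-measurable, proxy
independence upgrades to `(Z, A, X) ⟂ (W, T(a), X) | U, X`; this factors the last conditional
expectation as `P(A = a | U, X) · E[D | U, X]`, and positivity forces `E[D | U, X] = 0`.
Hence `E[h(t, W, a, X)] = P(T(a) > t)`, and the augmentation term `1{A = a} q̃ D` has conditional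
mean `E[1{A = a} q̃ | U, X] · E[D | U, X] = 0` whatever `q̃` is.
-/

/-- Conditional independence of `F` and `G` given the σ-algebra `m`: all conditional
covariances of bounded measurable functionals of the two groups vanish. -/
def CondIndepGiven {Ω α β : Type*} [MeasurableSpace Ω] [MeasurableSpace α] [MeasurableSpace β]
    (P : Measure Ω) (m : MeasurableSpace Ω) (F : Ω → α) (G : Ω → β) : Prop :=
  ∀ (f : α → ℝ) (g : β → ℝ), Measurable f → Measurable g →
    (∃ C, ∀ x, |f x| ≤ C) → (∃ C, ∀ x, |g x| ≤ C) →
    (P[fun ω => f (F ω) * g (G ω)|m]) =ᵐ[P]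
      fun ω => (P[fun ω' => f (F ω')|m]) ω * (P[fun ω' => g (G ω')|m]) ω

section CondExp

variable {Ω : Type*} {m m' n : MeasurableSpace Ω} [mΩ : MeasurableSpace Ω] {μ : Measure Ω}

theorem setIntegral_preimage_eq_of_isPiSystem {δ : Type*} [mδ : MeasurableSpace δ]
    {f g : Ω → ℝ} (hf : Integrable f μ) (hg : Integrable g μ) {V : Ω → δ} (hV : Measurable V)
    {C : Set (Set δ)} (hgen : mδ = MeasurableSpace.generateFrom C) (hC : IsPiSystem C)
    (huniv : ∫ ω, f ω ∂μ = ∫ ω, g ω ∂μ)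
    (hbasic : ∀ S ∈ C, ∫ ω in V ⁻¹' S, f ω ∂μ = ∫ ω in V ⁻¹' S, g ω ∂μ)
    {S : Set δ} (hS : MeasurableSet S) :
    ∫ ω in V ⁻¹' S, f ω ∂μ = ∫ ω in V ⁻¹' S, g ω ∂μ := by
  induction S, hS using MeasurableSpace.induction_on_inter hgen hC with
  | empty => simp
  | basic S hS => exact hbasic S hS
  | compl S hS ih =>
    rw [Set.preimage_compl, setIntegral_compl (hV hS) hf, setIntegral_compl (hV hS) hg, huniv, ih]
  | iUnion S hdisj hS ih =>
    simp only [Set.preimage_iUnion]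
    rw [integral_iUnion (fun i => hV (hS i)) (hdisj.mono fun _ _ h => h.preimage V)
        hf.integrableOn,
      integral_iUnion (fun i => hV (hS i)) (hdisj.mono fun _ _ h => h.preimage V)
        hg.integrableOn]
    exact tsum_congr ih

variable [IsFiniteMeasure μ]

theorem condExp_mul_eq_mul_condExp_of_condExp_eq (hm : m ≤ m')
    (hm' : m' ≤ mΩ) {Y Z : Ω → ℝ} (hY : Integrable Y μ) (hZ : StronglyMeasurable[m'] Z) {c : ℝ}
    (hZc : ∀ ω, ‖Z ω‖ ≤ c) (hYm : μ[Y | m'] =ᵐ[μ] μ[Y | m]) :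
    μ[Y * Z | m] =ᵐ[μ] μ[Y | m] * μ[Z | m] := by
  have hZ' : AEStronglyMeasurable Z μ := (hZ.mono hm').aestronglyMeasurable
  have hYZ : Integrable (Y * Z) μ := hY.mul_bdd hZ' (ae_of_all _ hZc)
  calc μ[Y * Z | m] =ᵐ[μ] μ[μ[Y * Z | m'] | m] := (condExp_condExp_of_le hm hm').symm
    _ =ᵐ[μ] μ[μ[Y | m] * Z | m] := by
      refine condExp_congr_ae ?_
      filter_upwards [condExp_mul_of_stronglyMeasurable_right hZ hYZ hY, hYm] with ω h1 h2
      simp only [h1, Pi.mul_apply, h2]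
    _ =ᵐ[μ] μ[Y | m] * μ[Z | m] :=
      condExp_mul_of_stronglyMeasurable_left stronglyMeasurable_condExp
        (integrable_condExp.mul_bdd hZ' (ae_of_all _ hZc)) (.of_bound hZ' c (ae_of_all _ hZc))

theorem condExp_comap_prodMk_eq {γ β : Type*} [mγ : MeasurableSpace γ] [MeasurableSpace β]
    {V : Ω → γ} {G : Ω → β} (hV : Measurable V) (hG : Measurable G) {Y : Ω → ℝ}
    (hY : Integrable Y μ)
    (hYG : ∀ t : Set β, MeasurableSet t →
      μ[(G ⁻¹' t).indicator Y | mγ.comap V]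
        =ᵐ[μ] μ[Y | mγ.comap V] * μ[(G ⁻¹' t).indicator 1 | mγ.comap V]) :
    μ[Y | MeasurableSpace.comap (fun ω => (V ω, G ω)) inferInstance] =ᵐ[μ] μ[Y | mγ.comap V] := by
  have hm : mγ.comap V ≤ mΩ := hV.comap_le
  have hVG : Measurable[MeasurableSpace.comap (fun ω => (V ω, G ω)) inferInstance] V :=
    measurable_fst.comp (Measurable.of_comap_le le_rfl)
  refine (ae_eq_condExp_of_forall_setIntegral_eq (hV.prodMk hG).comap_le hY
    (fun _ _ _ => integrable_condExp.integrableOn) ?_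
    (stronglyMeasurable_condExp.mono hVG.comap_le).aestronglyMeasurable).symm
  rintro _ ⟨S, hS, rfl⟩ -
  refine setIntegral_preimage_eq_of_isPiSystem integrable_condExp hY (hV.prodMk hG)
    generateFrom_prod.symm isPiSystem_prod (integral_condExp hm) ?_ hS
  -- on `V⁻¹ s ∩ G⁻¹ t` both set integrals equal `∫ in V⁻¹ s, E[Y | V] * P(G ∈ t | V)`
  rintro _ ⟨s, hs, t, ht, rfl⟩
  have hVs : MeasurableSet[mγ.comap V] (V ⁻¹' s) := ⟨s, hs, rfl⟩
  have hpull : (G ⁻¹' t).indicator (μ[Y | mγ.comap V])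
      = μ[Y | mγ.comap V] * (G ⁻¹' t).indicator 1 := by
    ext ω; by_cases hω : ω ∈ G ⁻¹' t <;> simp [hω]
  rw [Set.mk_preimage_prod, ← setIntegral_indicator (hG ht), ← setIntegral_indicator (hG ht),
    ← setIntegral_condExp hm (integrable_condExp.indicator (hG ht)) hVs,
    ← setIntegral_condExp hm (hY.indicator (hG ht)) hVs]
  have hind : Integrable ((G ⁻¹' t).indicator (1 : Ω → ℝ)) μ :=
    (integrable_const 1).indicator (hG ht)
  refine setIntegral_congr_ae (hm _ hVs) ?_
  filter_upwards [condExp_mul_of_stronglyMeasurable_left stronglyMeasurable_condExp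
    (hpull ▸ integrable_condExp.indicator (hG ht)) hind, hYG t ht] with ω h1 h2 _
  rw [hpull, h1, h2]

theorem condExp_eq_zero_of_condExp_residual_eq_zero (hmn : m ≤ n) (hn : n ≤ mΩ)
    {I R D : Ω → ℝ} (hI : StronglyMeasurable[n] I) {c : ℝ} (hIc : ∀ ω, ‖I ω‖ ≤ c)
    (hR : Integrable R μ) (hRn : μ[R | n] =ᵐ[μ] 0) (hRD : I * R = I * D)
    (hID : μ[I * D | m] =ᵐ[μ] μ[I | m] * μ[D | m]) (hpos : ∀ᵐ ω ∂μ, μ[I | m] ω ≠ 0) :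
    μ[D | m] =ᵐ[μ] 0 := by
  have hIR : μ[I * R | m] =ᵐ[μ] 0 := calc
    μ[I * R | m] =ᵐ[μ] μ[μ[I * R | n] | m] := (condExp_condExp_of_le hmn hn).symm
    _ =ᵐ[μ] μ[0 | m] := condExp_congr_ae <| by
        filter_upwards [condExp_stronglyMeasurable_mul_of_bound hn hI hR c (ae_of_all _ hIc),
          hRn] with ω h1 h2
        simp [h1, h2]
    _ = 0 := condExp_zero
  filter_upwards [hID, hRD ▸ hIR, hpos] with ω h1 h2 h3
  simpa [h3] using h1.symm.trans h2

theorem ae_condExp_ite_eq_ne_zero (hm : m ≤ mΩ) {A π : Ω → ℝ}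
    (hA : Measurable A) (hA01 : ∀ ω, A ω = 0 ∨ A ω = 1) (hπ : π =ᵐ[μ] μ[A | m])
    (hπpos : ∀ᵐ ω ∂μ, 0 < π ω ∧ π ω < 1) {a : ℝ} (ha : a = 0 ∨ a = 1) :
    ∀ᵐ ω ∂μ, μ[fun ω => if A ω = a then (1 : ℝ) else 0 | m] ω ≠ 0 := by
  rcases ha with rfl | rfl
  · have hA0 : (fun ω => if A ω = 0 then (1 : ℝ) else 0) = (fun _ => 1) - A := by
      ext ω; rcases hA01 ω with hω | hω <;> simp [hω]
    have hAint : Integrable A μ := .of_bound hA.aestronglyMeasurable 1 <|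
      ae_of_all _ fun ω => by rcases hA01 ω with hω | hω <;> simp [hω]
    rw [hA0]
    filter_upwards [condExp_sub (integrable_const 1) hAint m, hπ, hπpos] with ω h1 h2 h3
    rw [h1, Pi.sub_apply, condExp_const hm, ← h2]
    exact (sub_pos.2 h3.2).ne'
  · have hA1 : (fun ω => if A ω = 1 then (1 : ℝ) else 0) = A := by
      ext ω; rcases hA01 ω with hω | hω <;> simp [hω]
    rw [hA1]
    filter_upwards [hπ, hπpos] with ω h1 h2
    exact h1 ▸ h2.1.ne'

end CondExp

namespace CondIndepGiven

variable {Ω α β : Type*} {m : MeasurableSpace Ω} [mΩ : MeasurableSpace Ω] [MeasurableSpace α]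
  [MeasurableSpace β] {μ : Measure Ω} {F : Ω → α} {G : Ω → β}

theorem symm (h : CondIndepGiven μ m F G) : CondIndepGiven μ m G F :=
  fun f g hf hg hfb hgb =>
    (condExp_congr_ae (ae_of_all _ fun _ => mul_comm _ _)).trans
      ((h g f hg hf hgb hfb).mono fun _ hω => hω.trans (mul_comm _ _))

theorem comp {α' β' : Type*} [MeasurableSpace α'] [MeasurableSpace β'] {φ : α → α'} {ψ : β → β'}
    (hφ : Measurable φ) (hψ : Measurable ψ) (h : CondIndepGiven μ m F G) :
    CondIndepGiven μ m (fun ω => φ (F ω)) (fun ω => ψ (G ω)) :=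
  fun f g hf hg hfb hgb => h (f ∘ φ) (g ∘ ψ) (hf.comp hφ) (hg.comp hψ)
    (hfb.imp fun _ hC _ => hC _) (hgb.imp fun _ hC _ => hC _)

variable [IsFiniteMeasure μ] {γ 𝓧 : Type*} [mγ : MeasurableSpace γ] [MeasurableSpace 𝓧]
  {V : Ω → γ} {X : Ω → 𝓧}

theorem prodMk_right (hV : Measurable V) (hF : Measurable F) (hG : Measurable G)
    (hX : Measurable[mγ.comap V] X) (h : CondIndepGiven μ (mγ.comap V) F G) :
    CondIndepGiven μ (mγ.comap V) F fun ω => (G ω, X ω) := by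
  rintro f g hf hg ⟨Cf, hCf⟩ ⟨Cg, hCg⟩
  have hVG : Measurable[MeasurableSpace.comap (fun ω => (V ω, G ω)) inferInstance]
      fun ω => (V ω, G ω) := Measurable.of_comap_le le_rfl
  have hle : mγ.comap V ≤ MeasurableSpace.comap (fun ω => (V ω, G ω)) inferInstance :=
    (measurable_fst.comp hVG).comap_le
  have hfF : Integrable (fun ω => f (F ω)) μ :=
    .of_bound (hf.comp hF).aestronglyMeasurable Cf (ae_of_all _ fun ω => hCf (F ω))
  refine condExp_mul_eq_mul_condExp_of_condExp_eq hle (hV.prodMk hG).comap_le hfF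
    (hg.comp ((measurable_snd.comp hVG).prodMk (hX.mono hle le_rfl))).stronglyMeasurable
    (fun ω => hCg _) (condExp_comap_prodMk_eq hV hG hfF fun t ht => ?_)
  have hind : (G ⁻¹' t).indicator (fun ω => f (F ω))
      = fun ω => f (F ω) * t.indicator 1 (G ω) := by
    ext ω; by_cases hω : G ω ∈ t <;> simp [hω]
  rw [hind]
  exact h f (t.indicator 1) hf (measurable_const.indicator ht) ⟨Cf, hCf⟩
    ⟨1, fun x => by by_cases hx : x ∈ t <;> simp [hx]⟩

theorem prodMk (hV : Measurable V) (hF : Measurable F) (hG : Measurable G)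
    (hX : Measurable[mγ.comap V] X) (h : CondIndepGiven μ (mγ.comap V) F G) :
    CondIndepGiven μ (mγ.comap V) (fun ω => (F ω, X ω)) (fun ω => (G ω, X ω)) :=
  ((h.prodMk_right hV hF hG hX).symm.prodMk_right hV (hG.prodMk (hX.mono hV.comap_le le_rfl)) hF
    hX).symm

end CondIndepGiven

section BridgeResidual

variable {Ω 𝓧 𝓩 𝓦 : Type*}

lemma abs_ite_one_zero_le (p : Prop) [Decidable p] : |if p then (1 : ℝ) else 0| ≤ 1 := by
  split_ifs <;> simp

noncomputable def bridgeResidual (h : 𝓦 × ℝ × 𝓧 → ℝ) (a t : ℝ) (p : (𝓦 × ℝ) × 𝓧) : ℝ :=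
  (if t < p.1.2 then 1 else 0) - h (p.1.1, a, p.2)

variable {h : 𝓦 × ℝ × 𝓧 → ℝ} {a t : ℝ}

lemma abs_bridgeResidual_le {C : ℝ} (hC : ∀ x, |h x| ≤ C) (p : (𝓦 × ℝ) × 𝓧) :
    |bridgeResidual h a t p| ≤ 1 + C :=
  (abs_sub _ _).trans (add_le_add (abs_ite_one_zero_le _) (hC _))

variable {m n : MeasurableSpace Ω} [mΩ : MeasurableSpace Ω] [MeasurableSpace 𝓧]
  [MeasurableSpace 𝓩] [MeasurableSpace 𝓦] {P : Measure Ω}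

lemma measurable_bridgeResidual (hh : Measurable h) : Measurable (bridgeResidual h a t) :=
  (Measurable.ite (measurableSet_lt measurable_const (by fun_prop)) measurable_const
    measurable_const).sub (hh.comp (by fun_prop))

theorem condExp_bridgeResidual_eq_zero [IsFiniteMeasure P] (hmn : m ≤ n) (hn : n ≤ mΩ)
    {A T Ta : Ω → ℝ} {X : Ω → 𝓧} {W : Ω → 𝓦} (hT : Measurable T) (hX : Measurable X)
    (hW : Measurable W) (hAn : Measurable[n] A) (hcons : ∀ ω, A ω = a → T ω = Ta ω)
    (hh : Measurable h) {C : ℝ} (hC : ∀ x, |h x| ≤ C)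
    (hbridge : P[fun ω => h (W ω, A ω, X ω) | n]
      =ᵐ[P] P[fun ω => if t < T ω then (1 : ℝ) else 0 | n])
    (hci : CondIndepGiven P m A fun ω => ((W ω, Ta ω), X ω))
    (hpos : ∀ᵐ ω ∂P, P[fun ω => if A ω = a then (1 : ℝ) else 0 | m] ω ≠ 0) :
    P[fun ω => bridgeResidual h a t ((W ω, Ta ω), X ω) | m] =ᵐ[P] 0 := by
  have hind : Measurable fun x : ℝ => if x = a then (1 : ℝ) else 0 :=
    Measurable.ite measurableSet_eq measurable_const measurable_const
  have hS : Integrable (fun ω => if t < T ω then (1 : ℝ) else 0) P :=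
    .of_bound (Measurable.ite (measurableSet_lt measurable_const hT) measurable_const
      measurable_const).aestronglyMeasurable 1 (ae_of_all _ fun _ => abs_ite_one_zero_le _)
  have hH : Integrable (fun ω => h (W ω, A ω, X ω)) P :=
    .of_bound (hh.comp (hW.prodMk ((hAn.mono hn le_rfl).prodMk hX))).aestronglyMeasurable C
      (ae_of_all _ fun _ => hC _)
  have hR : P[fun ω => (if t < T ω then 1 else 0) - h (W ω, A ω, X ω) | n] =ᵐ[P] 0 := by
    filter_upwards [condExp_sub hS hH n, hbridge] with ω h1 h2
    exact h1.trans (by simp [h2])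
  refine condExp_eq_zero_of_condExp_residual_eq_zero hmn hn (hind.comp hAn).stronglyMeasurable
    (fun _ => abs_ite_one_zero_le _) (hS.sub hH) hR ?_
    (hci _ _ hind (measurable_bridgeResidual hh) ⟨1, fun _ => abs_ite_one_zero_le _⟩
      ⟨1 + C, abs_bridgeResidual_le hC⟩) hpos
  ext ω
  by_cases hω : A ω = a <;> simp [hω, hcons ω, bridgeResidual]

theorem toReal_measure_lt_eq_integral_of_condExp_bridgeResidual_eq_zero [IsProbabilityMeasure P]
    (hm : m ≤ mΩ) {A T Ta : Ω → ℝ} {X : Ω → 𝓧} {Z : Ω → 𝓩} {W : Ω → 𝓦} (hA : Measurable A)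
    (hTa : Measurable Ta) (hX : Measurable X) (hZ : Measurable Z) (hW : Measurable W)
    (hcons : ∀ ω, A ω = a → T ω = Ta ω) (hh : Measurable h) {C : ℝ} (hC : ∀ x, |h x| ≤ C)
    {q : 𝓩 × ℝ × 𝓧 → ℝ} (hq : Measurable q) {Cq : ℝ} (hCq : ∀ x, |q x| ≤ Cq)
    (hci : CondIndepGiven P m (fun ω => ((Z ω, A ω), X ω)) (fun ω => ((W ω, Ta ω), X ω)))
    (hD : P[fun ω => bridgeResidual h a t ((W ω, Ta ω), X ω) | m] =ᵐ[P] 0) :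
    (P {ω | t < Ta ω}).toReal
      = ∫ ω, (if A ω = a then (1 : ℝ) else 0) * q (Z ω, A ω, X ω) *
          ((if t < T ω then (1 : ℝ) else 0) - h (W ω, A ω, X ω)) + h (W ω, a, X ω) ∂P := by
  set Q : (𝓩 × ℝ) × 𝓧 → ℝ := fun p => (if p.1.2 = a then 1 else 0) * q (p.1.1, p.1.2, p.2)
  have hQ : Measurable Q :=
    (Measurable.ite (measurableSet_eq_fun (by fun_prop) measurable_const) measurable_const
      measurable_const).mul (hq.comp (by fun_prop))
  have hQC : ∀ p, |Q p| ≤ 1 * Cq := fun p => by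
    rw [abs_mul]; exact mul_le_mul (abs_ite_one_zero_le _) (hCq _) (abs_nonneg _) zero_le_one
  have hDint : Integrable (fun ω => bridgeResidual h a t ((W ω, Ta ω), X ω)) P :=
    .of_bound ((measurable_bridgeResidual hh).comp (by fun_prop)).aestronglyMeasurable (1 + C)
      (ae_of_all _ fun _ => abs_bridgeResidual_le hC _)
  have hSa : Integrable (fun ω => if t < Ta ω then (1 : ℝ) else 0) P :=
    .of_bound (Measurable.ite (measurableSet_lt measurable_const hTa) measurable_const
      measurable_const).aestronglyMeasurable 1 (ae_of_all _ fun _ => abs_ite_one_zero_le _)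
  have hHa : Integrable (fun ω => h (W ω, a, X ω)) P :=
    .of_bound (hh.comp (by fun_prop)).aestronglyMeasurable C (ae_of_all _ fun _ => hC _)
  have hQD : Integrable
      (fun ω => Q ((Z ω, A ω), X ω) * bridgeResidual h a t ((W ω, Ta ω), X ω)) P :=
    hDint.bdd_mul (hQ.comp (by fun_prop)).aestronglyMeasurable (ae_of_all _ fun _ => hQC _)
  have hQD0 : ∫ ω, Q ((Z ω, A ω), X ω) * bridgeResidual h a t ((W ω, Ta ω), X ω) ∂P = 0 := by
    rw [← integral_condExp hm]
    refine integral_eq_zero_of_ae ?_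
    filter_upwards [hci Q _ hQ (measurable_bridgeResidual hh) ⟨_, hQC⟩
      ⟨_, abs_bridgeResidual_le hC⟩, hD] with ω h1 h2
    exact h1.trans (by simp [h2])
  have hD0 : ∫ ω, bridgeResidual h a t ((W ω, Ta ω), X ω) ∂P = 0 := by
    rw [← integral_condExp hm]
    exact integral_eq_zero_of_ae hD
  calc (P {ω | t < Ta ω}).toReal = ∫ ω, if t < Ta ω then (1 : ℝ) else 0 ∂P := by
        rw [← measureReal_def, ← integral_indicator_one (measurableSet_lt measurable_const hTa)]
        rfl
    _ = ∫ ω, h (W ω, a, X ω) ∂P := sub_eq_zero.1 ((integral_sub hSa hHa).symm.trans hD0)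
    _ = ∫ ω, Q ((Z ω, A ω), X ω) * bridgeResidual h a t ((W ω, Ta ω), X ω)
          + h (W ω, a, X ω) ∂P := by
        rw [integral_add hQD hHa, hQD0, zero_add]
    _ = _ := integral_congr_ae <| ae_of_all _ fun ω => by
        by_cases hω : A ω = a <;> simp [Q, hω, hcons ω, bridgeResidual]

end BridgeResidual

lemma eq_ite_of_treatment_eq {Ω : Type*} {A T T1 T0 : Ω → ℝ}
    (hT : ∀ ω, T ω = A ω * T1 ω + (1 - A ω) * T0 ω) {a : ℝ} (ha : a = 0 ∨ a = 1) {ω : Ω}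
    (hAa : A ω = a) : T ω = if a = 1 then T1 ω else T0 ω := by
  rcases ha with rfl | rfl <;> simp [hT ω, hAa]

theorem doubly_robust_under_outcome_bridge_general
    {Ω 𝓤 𝓧 𝓩 𝓦 : Type*} [MeasurableSpace Ω]
    [MeasurableSpace 𝓤] [MeasurableSpace 𝓧] [MeasurableSpace 𝓩] [MeasurableSpace 𝓦]
    (P : Measure Ω) [IsProbabilityMeasure P]
    -- the random variables
    (A : Ω → ℝ) (T1 T0 : Ω → ℝ) (U : Ω → 𝓤) (X : Ω → 𝓧) (Z : Ω → 𝓩) (W : Ω → 𝓦)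
    (hA : Measurable A) (hT1 : Measurable T1) (hT0 : Measurable T0)
    (hU : Measurable U) (hX : Measurable X) (hZ : Measurable Z) (hW : Measurable W)
    (hA01 : ∀ ω, A ω = 0 ∨ A ω = 1)
    -- observed outcome (consistency)
    (T : Ω → ℝ) (hT : ∀ ω, T ω = A ω * T1 ω + (1 - A ω) * T0 ω)
    -- positivity for a version `π` of `P(A = 1 | σ(U, X))`
    (π : Ω → ℝ)
    (hπver : π =ᵐ[P] P[A|MeasurableSpace.comap (fun ω => (U ω, X ω)) inferInstance])
    (hπpos : ∀ᵐ ω ∂P, 0 < π ω ∧ π ω < 1)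
    -- `h t` is, for each `t`, a bounded measurable function of `(W, A, X)`
    (h : ℝ → 𝓦 × ℝ × 𝓧 → ℝ) (hh : ∀ t, Measurable (h t))
    (hhbdd : ∀ t, ∃ C, ∀ x, |h t x| ≤ C)
    -- latent-level outcome bridge equation
    (hbridge : ∀ t : ℝ,
      (P[(fun ω => h t (W ω, A ω, X ω))|
          MeasurableSpace.comap (fun ω => (A ω, U ω, X ω)) inferInstance])
        =ᵐ[P]
      (P[(fun ω => if t < T ω then (1 : ℝ) else 0)|
          MeasurableSpace.comap (fun ω => (A ω, U ω, X ω)) inferInstance]))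
    -- proxy independence: `(Z, A) ⟂ (W, T(a)) | σ(U, X)` for `a = 1, 0`
    (hproxy1 : CondIndepGiven P (MeasurableSpace.comap (fun ω => (U ω, X ω)) inferInstance)
      (fun ω => (Z ω, A ω)) (fun ω => (W ω, T1 ω)))
    (hproxy0 : CondIndepGiven P (MeasurableSpace.comap (fun ω => (U ω, X ω)) inferInstance)
      (fun ω => (Z ω, A ω)) (fun ω => (W ω, T0 ω))) :
    ∀ a : ℝ, (a = 0 ∨ a = 1) → ∀ t : ℝ,
      ∀ qtil : 𝓩 × ℝ × 𝓧 → ℝ, Measurable qtil → (∃ C, ∀ x, |qtil x| ≤ C) →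
        (P {ω | t < (if a = 1 then T1 ω else T0 ω)}).toReal
          = ∫ ω, (if A ω = a then (1 : ℝ) else 0) * qtil (Z ω, A ω, X ω) *
                ((if t < T ω then (1 : ℝ) else 0) - h t (W ω, A ω, X ω))
              + h t (W ω, a, X ω) ∂P := by
  intro a ha t q hq ⟨Cq, hCq⟩
  obtain ⟨Ch, hCh⟩ := hhbdd t
  have hUX : Measurable[MeasurableSpace.comap (fun ω => (U ω, X ω)) inferInstance]
      fun ω => (U ω, X ω) := Measurable.of_comap_le le_rfl
  have hAUX : Measurable[MeasurableSpace.comap (fun ω => (A ω, U ω, X ω)) inferInstance]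
      fun ω => (A ω, U ω, X ω) := Measurable.of_comap_le le_rfl
  have hmn : MeasurableSpace.comap (fun ω => (U ω, X ω)) inferInstance
      ≤ MeasurableSpace.comap (fun ω => (A ω, U ω, X ω)) inferInstance :=
    (measurable_snd.comp hAUX).comap_le
  have hTmeas : Measurable T := by
    rw [funext hT]
    fun_prop
  have hTa : Measurable fun ω => if a = 1 then T1 ω else T0 ω := by
    by_cases ha1 : a = 1 <;> simpa [ha1]
  have hcons : ∀ ω, A ω = a → T ω = if a = 1 then T1 ω else T0 ω :=
    fun _ => eq_ite_of_treatment_eq hT ha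
  have hproxy : CondIndepGiven P (MeasurableSpace.comap (fun ω => (U ω, X ω)) inferInstance)
      (fun ω => (Z ω, A ω)) (fun ω => (W ω, if a = 1 then T1 ω else T0 ω)) := by
    rcases ha with rfl | rfl <;> simpa
  have hci := hproxy.prodMk (hU.prodMk hX) (hZ.prodMk hA) (hW.prodMk hTa) (X := X)
    (measurable_snd.comp hUX)
  refine toReal_measure_lt_eq_integral_of_condExp_bridgeResidual_eq_zero (hU.prodMk hX).comap_le
    hA hTa hX hZ hW hcons (hh t) hCh hq hCq hci ?_
  exact condExp_bridgeResidual_eq_zero hmn (hA.prodMk (hU.prodMk hX)).comap_le hTmeas hX hW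
    (measurable_fst.comp hAUX) hcons (hh t) hCh (hbridge t)
    (hci.comp (φ := fun p => p.1.2) (by fun_prop) measurable_id)
    (ae_condExp_ite_eq_ne_zero (hU.prodMk hX).comap_le hA hA01 hπver hπpos ha)

/-- **Double robustness under model ℳ_h.** If `h` solves the latent-level outcome bridge
equation and proxy independence holds, then for every `a ∈ {0,1}`, `t ∈ ℝ`, and every
bounded measurable function `q̃` of `(Z,A,X)`,
`P(T(a) > t) = E[ 1{A = a} ⬝ q̃(Z,A,X) ⬝ (1{T > t} − h(t,W,A,X)) + h(t,W,a,X) ]`. -/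
theorem doubly_robust_under_outcome_bridge
    {Ω 𝓤 𝓧 𝓩 𝓦 : Type*} [MeasurableSpace Ω]
    [MeasurableSpace 𝓤] [StandardBorelSpace 𝓤] [MeasurableSpace 𝓧] [StandardBorelSpace 𝓧]
    [MeasurableSpace 𝓩] [StandardBorelSpace 𝓩] [MeasurableSpace 𝓦] [StandardBorelSpace 𝓦]
    (P : Measure Ω) [IsProbabilityMeasure P]
    -- the random variables
    (A : Ω → ℝ) (T1 T0 : Ω → ℝ) (U : Ω → 𝓤) (X : Ω → 𝓧) (Z : Ω → 𝓩) (W : Ω → 𝓦)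
    (hA : Measurable A) (hT1 : Measurable T1) (hT0 : Measurable T0)
    (hU : Measurable U) (hX : Measurable X) (hZ : Measurable Z) (hW : Measurable W)
    (hA01 : ∀ ω, A ω = 0 ∨ A ω = 1)
    -- observed outcome (consistency)
    (T : Ω → ℝ) (hT : ∀ ω, T ω = A ω * T1 ω + (1 - A ω) * T0 ω)
    -- positivity for a version `π` of `P(A = 1 | σ(U, X))`
    (π : Ω → ℝ)
    (hπver : π =ᵐ[P] P[A|MeasurableSpace.comap (fun ω => (U ω, X ω)) inferInstance])
    (hπpos : ∀ᵐ ω ∂P, 0 < π ω ∧ π ω < 1)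
    -- `h t` is, for each `t`, a bounded measurable function of `(W, A, X)`
    (h : ℝ → 𝓦 × ℝ × 𝓧 → ℝ) (hh : ∀ t, Measurable (h t))
    (hhbdd : ∀ t, ∃ C, ∀ x, |h t x| ≤ C)
    -- latent-level outcome bridge equation
    (hbridge : ∀ t : ℝ,
      (P[(fun ω => h t (W ω, A ω, X ω))|
          MeasurableSpace.comap (fun ω => (A ω, U ω, X ω)) inferInstance])
        =ᵐ[P]
      (P[(fun ω => if t < T ω then (1 : ℝ) else 0)|
          MeasurableSpace.comap (fun ω => (A ω, U ω, X ω)) inferInstance]))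
    -- proxy independence: `(Z, A) ⟂ (W, T(a)) | σ(U, X)` for `a = 1, 0`
    (hproxy1 : CondIndepGiven P (MeasurableSpace.comap (fun ω => (U ω, X ω)) inferInstance)
      (fun ω => (Z ω, A ω)) (fun ω => (W ω, T1 ω)))
    (hproxy0 : CondIndepGiven P (MeasurableSpace.comap (fun ω => (U ω, X ω)) inferInstance)
      (fun ω => (Z ω, A ω)) (fun ω => (W ω, T0 ω))) :
    ∀ a : ℝ, (a = 0 ∨ a = 1) → ∀ t : ℝ,
      ∀ qtil : 𝓩 × ℝ × 𝓧 → ℝ, Measurable qtil → (∃ C, ∀ x, |qtil x| ≤ C) →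
        (P {ω | t < (if a = 1 then T1 ω else T0 ω)}).toReal
          = ∫ ω, (if A ω = a then (1 : ℝ) else 0) * qtil (Z ω, A ω, X ω) *
                ((if t < T ω then (1 : ℝ) else 0) - h t (W ω, A ω, X ω))
              + h t (W ω, a, X ω) ∂P :=
  doubly_robust_under_outcome_bridge_general P A T1 T0 U X Z W hA hT1 hT0 hU hX hZ hW hA01 T hT π
    hπver hπpos h hh hhbdd hbridge hproxy1 hproxy0
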